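/- arXiv:2004.13442 — 2 statements merged into one kernel-verified Lean document; each statement's English description precedes it below -/
import Mathlib

section
/- Let G be a Δ-regular bipartite graph with parts of size n and second eigenvalue at most λ, H a symmetric q×q δ-matrix, and ε ∈ (0,1) with ε ≥ 2qλ/Δ and ε² ≥ 8q²log(q)/(Δ log(1/δ)). Then for every configuration σ : V → [q] whose associated pair (B₀(σ), B₁(σ)) is not a biclique of H, the weight satisfies w_{G,H}(σ) ≤ δ^{Δε²n/(2q²)}. -/
open Finset
open scoped Classical

def IsDeltaMatrix {q : ℕ} (δ : ℝ) (H : Matrix (Fin q) (Fin q) ℝ) : Prop :=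
  (∀ i j, 0 ≤ H i j) ∧ (∃ i j, H i j = 1) ∧ (∀ i j, H i j = 1 ∨ H i j ≤ δ)

def IsBiclique {q : ℕ} (H : Matrix (Fin q) (Fin q) ℝ) (B0 B1 : Finset (Fin q)) : Prop :=
  ∀ i ∈ B0, ∀ j ∈ B1, H i j = 1

/-- Weight of a spin configuration on a bipartite graph (each edge counted once). -/
def bipWeight {n q : ℕ} (G : SimpleGraph (Fin n ⊕ Fin n)) [DecidableRel G.Adj]
    (H : Matrix (Fin q) (Fin q) ℝ) (σ : Fin n ⊕ Fin n → Fin q) : ℝ :=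
  ∏ u : Fin n, ∏ v : Fin n,
    if G.Adj (Sum.inl u) (Sum.inr v) then H (σ (Sum.inl u)) (σ (Sum.inr v)) else 1

/-- The set of spins used by `σ` on side `0` (resp. `1`) by at least `εn/q` vertices. -/
noncomputable def popularSpins0 {n q : ℕ} (ε : ℝ) (σ : Fin n ⊕ Fin n → Fin q) : Finset (Fin q) :=
  Finset.univ.filter (fun j =>
    ε * n / q ≤ ((Finset.univ.filter (fun u : Fin n => σ (Sum.inl u) = j)).card : ℝ))

noncomputable def popularSpins1 {n q : ℕ} (ε : ℝ) (σ : Fin n ⊕ Fin n → Fin q) : Finset (Fin q) :=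
  Finset.univ.filter (fun j =>
    ε * n / q ≤ ((Finset.univ.filter (fun u : Fin n => σ (Sum.inr u) = j)).card : ℝ))

/-! The argument is the expander mixing lemma for bipartite graphs. For `S ⊆ V⁰`, `T ⊆ V¹`
the vector `x = 1_S - (|S|/n) 1_{V⁰}` is orthogonal both to the constant vector and to the
vector that is `1` on `V⁰` and `-1` on `V¹`; in a connected `Δ`-regular bipartite graph these
span the eigenspaces of `Δ` and `-Δ`, so expanding in an orthonormal eigenbasis gives
`|⟨x, A 1_T⟩| ≤ λ ‖x‖ ‖1_T‖`, i.e. `e(S, T) ≥ Δ|S||T|/n - λ √(|S||T|)`.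

If `j₀ ∈ B₀(σ)`, `j₁ ∈ B₁(σ)` and `H j₀ j₁ ≤ δ`, take `S = σ⁻¹(j₀) ∩ V⁰`, `T = σ⁻¹(j₁) ∩ V¹`.
Both have at least `εn/q` elements, and `ε ≥ 2qλ/Δ` makes the error term at most half of the
main term, so there are at least `Δε²n/(2q²)` edges between them. Each contributes a factor
at most `δ` to the weight, and every other factor is at most `1`.
-/

open Matrix Sum

theorem OrthonormalBasis.sum_dotProduct_mul_dotProduct {ι : Type*} [Fintype ι]
    (b : OrthonormalBasis ι ℝ (EuclideanSpace ℝ ι)) (u w : ι → ℝ) :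
    ∑ i, (b i ⬝ᵥ u) * (b i ⬝ᵥ w) = u ⬝ᵥ w := by
  have h := b.sum_inner_mul_inner (WithLp.toLp 2 u) (WithLp.toLp 2 w)
  simp only [EuclideanSpace.inner_eq_star_dotProduct, star_trivial] at h
  simpa [dotProduct_comm] using h

theorem Matrix.IsHermitian.abs_dotProduct_mulVec_le {ι : Type*} [Fintype ι] [DecidableEq ι]
    {A : Matrix ι ι ℝ} (hA : A.IsHermitian) {lam : ℝ} (hlam : 0 ≤ lam) {x : ι → ℝ}
    (hx : ∀ μ ∈ spectrum ℝ A, lam < |μ| → ∀ v, A *ᵥ v = μ • v → x ⬝ᵥ v = 0) (y : ι → ℝ) :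
    |x ⬝ᵥ A *ᵥ y| ≤ lam * √(x ⬝ᵥ x) * √(y ⬝ᵥ y) := by
  set b := hA.eigenvectorBasis
  have hAb : ∀ i, b i ⬝ᵥ A *ᵥ y = hA.eigenvalues i * (b i ⬝ᵥ y) := by
    intro i
    rw [dotProduct_mulVec, ← mulVec_transpose, ← conjTranspose_eq_transpose_of_trivial, hA.eq,
      hA.mulVec_eigenvectorBasis, smul_dotProduct, smul_eq_mul]
  have hterm : ∀ i, |(b i ⬝ᵥ x) * (b i ⬝ᵥ A *ᵥ y)| ≤ lam * (|b i ⬝ᵥ x| * |b i ⬝ᵥ y|) := by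
    intro i
    rw [hAb, abs_mul, abs_mul, mul_left_comm]
    by_cases hμ : |hA.eigenvalues i| ≤ lam
    · gcongr
    · rw [dotProduct_comm, hx _ (hA.eigenvalues_mem_spectrum_real i) (not_le.mp hμ) _
        (hA.mulVec_eigenvectorBasis i)]
      simp
  calc |x ⬝ᵥ A *ᵥ y| = |∑ i, (b i ⬝ᵥ x) * (b i ⬝ᵥ A *ᵥ y)| := by
        rw [b.sum_dotProduct_mul_dotProduct]
    _ ≤ ∑ i, lam * (|b i ⬝ᵥ x| * |b i ⬝ᵥ y|) :=
      (abs_sum_le_sum_abs _ _).trans (sum_le_sum fun i _ => hterm i)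
    _ ≤ lam * (√(∑ i, |b i ⬝ᵥ x| ^ 2) * √(∑ i, |b i ⬝ᵥ y| ^ 2)) := by
      rw [← mul_sum]
      gcongr
      exact Real.sum_mul_le_sqrt_mul_sqrt _ _ _
    _ = lam * √(x ⬝ᵥ x) * √(y ⬝ᵥ y) := by
      rw [← b.sum_dotProduct_mul_dotProduct x x, ← b.sum_dotProduct_mul_dotProduct y y, mul_assoc]
      simp only [sq, abs_mul_abs_self]

namespace SimpleGraph

variable {V : Type*} [Fintype V] [DecidableEq V] {G : SimpleGraph V} [DecidableRel G.Adj]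

theorem eq_of_adjMatrix_mulVec_eq_smul (hconn : G.Connected) {Δ : ℕ}
    (hreg : G.IsRegularOfDegree Δ) {v : V → ℝ} (hv : G.adjMatrix ℝ *ᵥ v = (Δ : ℝ) • v)
    (u w : V) : v u = v w := by
  have hL : G.lapMatrix ℝ *ᵥ v = 0 := by
    ext i
    rw [lapMatrix, sub_mulVec, Pi.sub_apply, degMatrix_mulVec_apply, hv, hreg i]
    simp
  exact G.lapMatrix_mulVec_eq_zero_iff_forall_reachable.mp hL u w (hconn.preconnected u w)

theorem dotProduct_eq_zero_of_adjMatrix_mulVec_eq_smul (hconn : G.Connected) {Δ : ℕ}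
    (hreg : G.IsRegularOfDegree Δ) {x v : V → ℝ} (hx : x ⬝ᵥ 1 = 0)
    (hv : G.adjMatrix ℝ *ᵥ v = (Δ : ℝ) • v) : x ⬝ᵥ v = 0 := by
  obtain ⟨w⟩ := hconn.nonempty
  have hconst : v = v w • 1 :=
    funext fun u => by simp [eq_of_adjMatrix_mulVec_eq_smul hconn hreg hv u w]
  rw [hconst, dotProduct_smul, hx, smul_zero]

end SimpleGraph

def sideSign {α β : Type*} : α ⊕ β → ℝ := Sum.elim 1 (-1)

namespace SimpleGraph

variable {α β : Type*} {G : SimpleGraph (α ⊕ β)}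

theorem sideSign_eq_neg_of_adj (hG : G ≤ completeBipartiteGraph α β) {u w : α ⊕ β}
    (h : G.Adj u w) : sideSign w = -sideSign u := by
  have := hG h
  cases u <;> cases w <;> simp_all [sideSign]

variable [Fintype α] [Fintype β] [DecidableRel G.Adj]

theorem adjMatrix_mulVec_sideSign_mul (hG : G ≤ completeBipartiteGraph α β) (v : α ⊕ β → ℝ) :
    G.adjMatrix ℝ *ᵥ (sideSign * v) = -(sideSign * (G.adjMatrix ℝ *ᵥ v)) := by
  ext u
  simp only [adjMatrix_mulVec_apply, Pi.mul_apply, Pi.neg_apply, mul_sum, ← sum_neg_distrib]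
  refine sum_congr rfl fun w hw => ?_
  rw [sideSign_eq_neg_of_adj hG ((mem_neighborFinset _ _ _).mp hw), neg_mul]

theorem dotProduct_eq_zero_of_adjMatrix_mulVec_eq_neg_smul [DecidableEq α] [DecidableEq β]
    (hconn : G.Connected) (hG : G ≤ completeBipartiteGraph α β) {Δ : ℕ}
    (hreg : G.IsRegularOfDegree Δ) {x v : α ⊕ β → ℝ} (hx : x ⬝ᵥ sideSign = 0)
    (hv : G.adjMatrix ℝ *ᵥ v = -(Δ : ℝ) • v) : x ⬝ᵥ v = 0 := by
  have hsq : ∀ u : α ⊕ β, sideSign u * sideSign u = 1 := by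
    rintro (a | b) <;> simp [sideSign]
  have hflip : G.adjMatrix ℝ *ᵥ (sideSign * v) = (Δ : ℝ) • (sideSign * v) := by
    rw [adjMatrix_mulVec_sideSign_mul hG, hv, mul_smul_comm, ← neg_smul, neg_neg]
  have hx' : (sideSign * x) ⬝ᵥ 1 = 0 := by
    rw [← hx, dotProduct_one, dotProduct_comm]
    simp [dotProduct, mul_comm]
  calc x ⬝ᵥ v = (sideSign * x) ⬝ᵥ (sideSign * v) := by
        simp only [dotProduct, Pi.mul_apply, mul_mul_mul_comm _ (x _), hsq, one_mul]
    _ = 0 := dotProduct_eq_zero_of_adjMatrix_mulVec_eq_smul hconn hreg hx' hflip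

theorem abs_dotProduct_adjMatrix_mulVec_le [DecidableEq α] [DecidableEq β]
    (hconn : G.Connected) (hG : G ≤ completeBipartiteGraph α β) {Δ : ℕ}
    (hreg : G.IsRegularOfDegree Δ) {lam : ℝ} (hlam : 0 ≤ lam)
    (hspec : ∀ μ ∈ spectrum ℝ (G.adjMatrix ℝ), μ ≠ (Δ : ℝ) → μ ≠ -(Δ : ℝ) → |μ| ≤ lam)
    {x : α ⊕ β → ℝ} (hx₁ : x ⬝ᵥ 1 = 0) (hx₂ : x ⬝ᵥ sideSign = 0) (y : α ⊕ β → ℝ) :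
    |x ⬝ᵥ G.adjMatrix ℝ *ᵥ y| ≤ lam * √(x ⬝ᵥ x) * √(y ⬝ᵥ y) := by
  refine (G.isHermitian_adjMatrix ℝ).abs_dotProduct_mulVec_le hlam (fun μ hμ hlt v hv => ?_) y
  by_cases hpos : μ = Δ
  · exact dotProduct_eq_zero_of_adjMatrix_mulVec_eq_smul hconn hreg hx₁ (hpos ▸ hv)
  by_cases hneg : μ = -Δ
  · exact dotProduct_eq_zero_of_adjMatrix_mulVec_eq_neg_smul hconn hG hreg hx₂ (hneg ▸ hv)
  exact absurd (hspec μ hμ hpos hneg) (not_le.mpr hlt)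

end SimpleGraph

noncomputable def inlIndicator {α β : Type*} (S : Finset α) : α ⊕ β → ℝ :=
  Sum.elim (fun a => if a ∈ S then 1 else 0) 0

noncomputable def inrIndicator {α β : Type*} (T : Finset β) : α ⊕ β → ℝ :=
  Sum.elim 0 (fun b => if b ∈ T then 1 else 0)

section Indicators

variable {α β : Type*} [Fintype α] [Fintype β]

theorem inlIndicator_dotProduct (S : Finset α) (v : α ⊕ β → ℝ) :
    inlIndicator S ⬝ᵥ v = ∑ a ∈ S, v (inl a) := by
  simp [dotProduct, inlIndicator, Fintype.sum_sum_type, ite_mul, sum_ite_mem]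

theorem inrIndicator_dotProduct (T : Finset β) (v : α ⊕ β → ℝ) :
    inrIndicator T ⬝ᵥ v = ∑ b ∈ T, v (inr b) := by
  simp [dotProduct, inrIndicator, Fintype.sum_sum_type, ite_mul, sum_ite_mem]

end Indicators

namespace SimpleGraph

variable {α β : Type*} [Fintype α] [Fintype β] {G : SimpleGraph (α ⊕ β)} [DecidableRel G.Adj]

variable (G) in
def crossEdges (S : Finset α) (T : Finset β) : Finset (α × β) :=
  {p ∈ S ×ˢ T | G.Adj (inl p.1) (inr p.2)}

theorem inlIndicator_dotProduct_adjMatrix_mulVec_inrIndicator (S : Finset α) (T : Finset β) :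
    inlIndicator S ⬝ᵥ G.adjMatrix ℝ *ᵥ inrIndicator T = #(G.crossEdges S T) := by
  simp only [inlIndicator_dotProduct, mulVec, SimpleGraph.crossEdges, card_filter, sum_product]
  push_cast
  refine sum_congr rfl fun a _ => ?_
  rw [dotProduct_comm, inrIndicator_dotProduct]
  simp [adjMatrix_apply]

theorem inlIndicator_univ_dotProduct_adjMatrix_mulVec_inrIndicator
    (hG : G ≤ completeBipartiteGraph α β) {Δ : ℕ} (hreg : G.IsRegularOfDegree Δ) (T : Finset β) :
    inlIndicator univ ⬝ᵥ G.adjMatrix ℝ *ᵥ inrIndicator T = Δ * #T := by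
  have hdeg : ∀ b, (inlIndicator univ ᵥ* G.adjMatrix ℝ) (inr b) = Δ := by
    intro b
    rw [adjMatrix_vecMul_apply, ← hreg (inr b), ← card_neighborFinset_eq_degree,
      card_eq_sum_ones, Nat.cast_sum, Nat.cast_one]
    refine sum_congr rfl fun u hu => ?_
    have := hG ((mem_neighborFinset _ _ _).mp hu)
    cases u <;> simp_all [inlIndicator]
  rw [dotProduct_mulVec, dotProduct_comm, inrIndicator_dotProduct]
  simp [hdeg, mul_comm]

theorem card_crossEdges_ge [DecidableEq α] [DecidableEq β]
    (hconn : G.Connected) (hG : G ≤ completeBipartiteGraph α β) {Δ : ℕ}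
    (hreg : G.IsRegularOfDegree Δ) {lam : ℝ} (hlam : 0 ≤ lam)
    (hspec : ∀ μ ∈ spectrum ℝ (G.adjMatrix ℝ), μ ≠ (Δ : ℝ) → μ ≠ -(Δ : ℝ) → |μ| ≤ lam)
    (S : Finset α) (T : Finset β) :
    (Δ * #S * #T / Fintype.card α : ℝ) - lam * √((#S : ℝ) * #T) ≤ #(G.crossEdges S T) := by
  set p : ℝ := #S / Fintype.card α
  set x : α ⊕ β → ℝ := inlIndicator S - p • inlIndicator univ
  have hp : p * Fintype.card α = #S := div_mul_cancel_of_imp fun h => by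
    rw [Nat.cast_eq_zero, Fintype.card_eq_zero_iff] at h
    simp [Finset.eq_empty_of_isEmpty S]
  have hx₁ : x ⬝ᵥ 1 = 0 := by
    simp [x, sub_dotProduct, inlIndicator_dotProduct, hp]
  have hx₂ : x ⬝ᵥ sideSign = 0 := by
    simp [x, sub_dotProduct, inlIndicator_dotProduct, sideSign, hp]
  have hxx : x ⬝ᵥ x ≤ #S := by
    have hx : x ⬝ᵥ x = #S - p * #S := by
      simp only [x, sub_dotProduct, smul_dotProduct, inlIndicator_dotProduct]
      simp [inlIndicator, sum_sub_distrib]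
      linear_combination p * hp
    have : 0 ≤ p * #S := by positivity
    linarith
  have hyy : inrIndicator T ⬝ᵥ (inrIndicator T : α ⊕ β → ℝ) = #T := by
    rw [inrIndicator_dotProduct]
    simp [inrIndicator]
  have hxA : x ⬝ᵥ G.adjMatrix ℝ *ᵥ inrIndicator T = #(G.crossEdges S T) - p * (Δ * #T) := by
    rw [sub_dotProduct, smul_dotProduct, inlIndicator_dotProduct_adjMatrix_mulVec_inrIndicator,
      inlIndicator_univ_dotProduct_adjMatrix_mulVec_inrIndicator hG hreg, smul_eq_mul]
  have hmix := abs_dotProduct_adjMatrix_mulVec_le hconn hG hreg hlam hspec hx₁ hx₂ (inrIndicator T)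
  rw [hxA, hyy] at hmix
  have hsqrt : lam * √(x ⬝ᵥ x) * √(#T : ℝ) ≤ lam * √((#S : ℝ) * #T) := by
    rw [Real.sqrt_mul (Nat.cast_nonneg _), mul_assoc]
    gcongr
  have : (Δ * #S * #T / Fintype.card α : ℝ) = p * (Δ * #T) := by ring
  linarith [(abs_le.mp hmix).1]

theorem sq_mul_div_le_card_crossEdges [DecidableEq α] [DecidableEq β]
    (hconn : G.Connected) (hG : G ≤ completeBipartiteGraph α β) {Δ : ℕ}
    (hreg : G.IsRegularOfDegree Δ) {lam : ℝ} (hlam : 0 ≤ lam)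
    (hspec : ∀ μ ∈ spectrum ℝ (G.adjMatrix ℝ), μ ≠ (Δ : ℝ) → μ ≠ -(Δ : ℝ) → |μ| ≤ lam)
    {S : Finset α} {T : Finset β} {a : ℝ} (ha : 0 < a) (hS : a ≤ #S) (hT : a ≤ #T)
    (hlamΔ : 2 * Fintype.card α * lam ≤ Δ * a) :
    Δ * a ^ 2 / (2 * Fintype.card α) ≤ #(G.crossEdges S T) := by
  have hmix := card_crossEdges_ge hconn hG hreg hlam hspec S T
  set n : ℝ := (Fintype.card α : ℝ)
  set st : ℝ := #S * #T
  rcases (by positivity : (0 : ℝ) ≤ n).eq_or_lt with hn | hn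
  · rw [← hn, mul_zero, div_zero]
    positivity
  have hst : a ^ 2 ≤ st := by
    rw [sq]
    exact mul_le_mul hS hT ha.le (ha.le.trans hS)
  have hsqrt : a ≤ √st := Real.le_sqrt_of_sq_le hst
  have hcross : lam * √st ≤ Δ * st / (2 * n) := by
    rw [le_div_iff₀ (by positivity)]
    calc lam * √st * (2 * n) = 2 * n * lam * √st := by ring
      _ ≤ Δ * a * √st := by gcongr
      _ ≤ Δ * √st * √st := by gcongr
      _ = Δ * st := by rw [mul_assoc, Real.mul_self_sqrt (by positivity)]
  have hhalf : Δ * a ^ 2 / (2 * n) ≤ Δ * st / (2 * n) := by gcongr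
  have hsplit : (Δ * #S * #T / n : ℝ) = 2 * (Δ * st / (2 * n)) := by
    field_simp
    ring
  linarith

end SimpleGraph

theorem IsDeltaMatrix.le_one {q : ℕ} {δ : ℝ} {H : Matrix (Fin q) (Fin q) ℝ}
    (hH : IsDeltaMatrix δ H) (hδ : δ ≤ 1) (i j : Fin q) : H i j ≤ 1 :=
  (hH.2.2 i j).elim le_of_eq fun h => h.trans hδ

theorem bipWeight_le_pow_card_crossEdges {n q : ℕ} (G : SimpleGraph (Fin n ⊕ Fin n))
    [DecidableRel G.Adj] {δ : ℝ} {H : Matrix (Fin q) (Fin q) ℝ} (hH : IsDeltaMatrix δ H)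
    (hδ : δ ≤ 1) (σ : Fin n ⊕ Fin n → Fin q) {j₀ j₁ : Fin q} (hj : H j₀ j₁ ≤ δ) :
    bipWeight G H σ ≤ δ ^ #(G.crossEdges {u | σ (inl u) = j₀} {v | σ (inr v) = j₁}) := by
  set E := G.crossEdges {u | σ (inl u) = j₀} {v | σ (inr v) = j₁}
  rw [bipWeight, ← Fintype.prod_prod_type']
  calc ∏ p : Fin n × Fin n, (if G.Adj (inl p.1) (inr p.2) then H (σ (inl p.1)) (σ (inr p.2)) else 1)
      ≤ ∏ p : Fin n × Fin n, if p ∈ E then δ else 1 := by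
        refine prod_le_prod (fun p _ => ?_) (fun p _ => ?_)
        · split_ifs
          exacts [hH.1 _ _, zero_le_one]
        · by_cases hp : p ∈ E
          · obtain ⟨hp₁, hp₂⟩ := mem_filter.mp hp
            simp only [mem_product, mem_filter, mem_univ, true_and] at hp₁
            rw [if_pos hp₂, if_pos hp, hp₁.1, hp₁.2]
            exact hj
          · rw [if_neg hp]
            split_ifs
            exacts [hH.le_one hδ _ _, le_rfl]
    _ = δ ^ #E := by rw [prod_ite_mem, univ_inter, prod_const]

theorem stmt8_general (n q Δ : ℕ) (lam δ ε : ℝ) (hn : 0 < n) (hΔ : 3 ≤ Δ)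
    (hlam0 : 0 < lam) (hδ0 : 0 < δ) (hδ1 : δ < 1)
    (hε0 : 0 < ε)
    (hε2 : 2 * q * lam / Δ ≤ ε)
    (H : Matrix (Fin q) (Fin q) ℝ) (hH : IsDeltaMatrix δ H)
    (G : SimpleGraph (Fin n ⊕ Fin n)) [DecidableRel G.Adj]
    (hconn : G.Connected)
    (hbip : ∀ a b : Fin n, ¬ G.Adj (Sum.inl a) (Sum.inl b) ∧ ¬ G.Adj (Sum.inr a) (Sum.inr b))
    (hreg : ∀ v, G.degree v = Δ)
    (hspec : ∀ μ ∈ spectrum ℝ (G.adjMatrix ℝ), μ ≠ (Δ : ℝ) → μ ≠ -(Δ : ℝ) → |μ| ≤ lam)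
    (σ : Fin n ⊕ Fin n → Fin q)
    (hnotbic : ¬ IsBiclique H (popularSpins0 ε σ) (popularSpins1 ε σ)) :
    bipWeight G H σ ≤ δ ^ ((Δ : ℝ) * ε ^ 2 * n / (2 * q ^ 2)) := by
  obtain ⟨j₀, hj₀, j₁, hj₁, hne⟩ :
      ∃ j₀ ∈ popularSpins0 ε σ, ∃ j₁ ∈ popularSpins1 ε σ, H j₀ j₁ ≠ 1 := by
    simpa [IsBiclique] using hnotbic
  have hq₀ : (0 : ℝ) < q := Nat.cast_pos.mpr j₀.pos
  have hΔ₀ : (0 : ℝ) < Δ := Nat.cast_pos.mpr (by omega)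
  have hG : G ≤ completeBipartiteGraph (Fin n) (Fin n) := by
    rintro (a | a) (b | b) h <;> simp_all
  have hlam : 2 * Fintype.card (Fin n) * lam ≤ Δ * (ε * n / q) := by
    have := (div_le_iff₀ hΔ₀).mp hε2
    rw [Fintype.card_fin, mul_div_assoc', le_div_iff₀ hq₀]
    nlinarith
  have hedges := SimpleGraph.sq_mul_div_le_card_crossEdges hconn hG hreg hlam0.le hspec
    (by positivity) (mem_filter.mp hj₀).2 (mem_filter.mp hj₁).2 hlam
  rw [Fintype.card_fin, show (Δ : ℝ) * (ε * n / q) ^ 2 / (2 * n) = Δ * ε ^ 2 * n / (2 * q ^ 2) by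
    field_simp] at hedges
  calc bipWeight G H σ ≤ δ ^ #(G.crossEdges {u | σ (inl u) = j₀} {v | σ (inr v) = j₁}) :=
        bipWeight_le_pow_card_crossEdges G hH hδ1.le σ ((hH.2.2 j₀ j₁).resolve_left hne)
    _ = δ ^ (#(G.crossEdges {u | σ (inl u) = j₀} {v | σ (inr v) = j₁}) : ℝ) :=
        (Real.rpow_natCast _ _).symm
    _ ≤ δ ^ ((Δ : ℝ) * ε ^ 2 * n / (2 * q ^ 2)) :=
        Real.rpow_le_rpow_of_exponent_ge hδ0 hδ1.le hedges

/-- If the popular spins of `σ` do not form a biclique of `H`, then `σ` has tiny weight. -/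
theorem stmt8 (n q Δ : ℕ) (lam δ ε : ℝ) (hn : 0 < n) (hq : 2 ≤ q) (hΔ : 3 ≤ Δ)
    (hlam0 : 0 < lam) (hlamΔ : lam < Δ) (hδ0 : 0 < δ) (hδ1 : δ < 1)
    (hε0 : 0 < ε) (hε1 : ε < 1)
    (hε2 : 2 * q * lam / Δ ≤ ε)
    (hε3 : 8 * q ^ 2 * Real.log q / (Δ * Real.log (1 / δ)) ≤ ε ^ 2)
    (H : Matrix (Fin q) (Fin q) ℝ) (hsymm : H.IsSymm) (hH : IsDeltaMatrix δ H)
    (G : SimpleGraph (Fin n ⊕ Fin n)) [DecidableRel G.Adj]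
    (hconn : G.Connected)
    (hbip : ∀ a b : Fin n, ¬ G.Adj (Sum.inl a) (Sum.inl b) ∧ ¬ G.Adj (Sum.inr a) (Sum.inr b))
    (hreg : ∀ v, G.degree v = Δ)
    (hspec : ∀ μ ∈ spectrum ℝ (G.adjMatrix ℝ), μ ≠ (Δ : ℝ) → μ ≠ -(Δ : ℝ) → |μ| ≤ lam)
    (σ : Fin n ⊕ Fin n → Fin q)
    (hnotbic : ¬ IsBiclique H (popularSpins0 ε σ) (popularSpins1 ε σ)) :
    bipWeight G H σ ≤ δ ^ ((Δ : ℝ) * ε ^ 2 * n / (2 * q ^ 2)) :=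
  stmt8_general n q Δ lam δ ε hn hΔ hlam0 hδ0 hδ1 hε0 hε2 H hH G hconn hbip hreg hspec σ hnotbic
end

section
/- Let G be a Δ-regular bipartite graph with parts of size n in the class G^bip_{Δ,λ}, H a symmetric q×q δ-matrix, and ε ∈ (0, 1/(240 q log q)] with ε² ≥ 8q²log(q)/(Δ log(1/δ)) and ε ≥ 2qλ/Δ. Then for sufficiently large n, the overlap partition function satisfies Z^{overlap}_{G,H,3ε} ≤ e^{−n/(3q)}·Z_{G,H,ε}. -/
open Finset
open scoped Classical

def IsMaxBiclique {q : ℕ} (H : Matrix (Fin q) (Fin q) ℝ) (B0 B1 : Finset (Fin q)) : Prop :=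
  IsBiclique H B0 B1 ∧
    ∀ C0 C1, IsBiclique H C0 C1 → B0 ⊆ C0 → B1 ⊆ C1 → C0 = B0 ∧ C1 = B1

/-- `σ` is within `ε` of the maximal biclique `(B₀,B₁)`. -/
def NearBiclique {n q : ℕ} (ε : ℝ) (B0 B1 : Finset (Fin q))
    (σ : Fin n ⊕ Fin n → Fin q) : Prop :=
  (1 - ε) * (2 * n) ≤
    ((Finset.univ.filter (fun u : Fin n => σ (Sum.inl u) ∈ B0)).card : ℝ) +
      ((Finset.univ.filter (fun u : Fin n => σ (Sum.inr u) ∈ B1)).card : ℝ)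

/-!
A configuration that is `3ε`-close to two distinct maximal bicliques `(B₀,B₁) ≠ (C₀,C₁)` sends
all but at most `k = ⌊12εn⌋` vertices of each side into `B₀ ∩ C₀`, resp. `B₁ ∩ C₁`. By
maximality one of these intersections is a proper subset of `B₀`, resp. `B₁`, so it has at most
`(1 - 1/q)|B_i|` elements. As weights are at most `1`, counting such configurations bounds the
overlap weight of the pair by `C(n,k)² (2q²)^k (1 - 1/q)ⁿ |B₀|ⁿ|B₁|ⁿ`, whereas the configurations
mapping the two sides into `B₀` and `B₁` have weight `1` and give `Z_{G,H,ε} ≥ |B₀|ⁿ|B₁|ⁿ`.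
For `ε ≤ 1/(240 q log q)` the prefactor decays at a rate faster than `e^{-n/(3q)}`, which
absorbs the bounded number of pairs of bicliques once `n` is large.
-/

open Real Filter

theorem card_filter_card_notMem_le {ι α : Type*} [Fintype ι] [Fintype α] [DecidableEq ι]
    [DecidableEq α] (D : Finset α) {k : ℕ} (hk : k ≤ Fintype.card ι) :
    #((univ : Finset (ι → α)).filter fun f => #{i | f i ∉ D} ≤ k) ≤
      (Fintype.card ι).choose k * Fintype.card α ^ k * #D ^ (Fintype.card ι - k) := by
  set allowed : Finset ι → Finset (ι → α) :=
    fun T => Fintype.piFinset fun i => if i ∈ T then univ else D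
  have hcover : (univ.filter fun f : ι → α => #{i | f i ∉ D} ≤ k) ⊆
      (powersetCard k univ).biUnion allowed := by
    intro f hf
    obtain ⟨T, hbad, -, hT⟩ := exists_subsuperset_card_eq (subset_univ _) (mem_filter.1 hf).2
      (by simpa using hk)
    refine mem_biUnion.2 ⟨T, mem_powersetCard.2 ⟨subset_univ _, hT⟩, ?_⟩
    refine Fintype.mem_piFinset.2 fun i => ?_
    split_ifs with hi
    · exact mem_univ _
    · by_contra hfi
      exact hi (hbad (mem_filter.2 ⟨mem_univ _, hfi⟩))
  have hcard : ∀ T ∈ powersetCard k (univ : Finset ι),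
      #(allowed T) = Fintype.card α ^ k * #D ^ (Fintype.card ι - k) := by
    intro T hT
    rw [mem_powersetCard] at hT
    simp only [allowed, Fintype.card_piFinset, apply_ite, card_univ, prod_ite]
    rw [prod_const, prod_const, filter_mem_eq_inter, univ_inter, hT.2]
    simp only [filter_not, subset_univ, filter_mem_eq_of_subset, card_univ_sdiff, hT.2]
  calc _ ≤ #((powersetCard k univ).biUnion allowed) := card_le_card hcover
    _ ≤ ∑ T ∈ powersetCard k univ, #(allowed T) := card_biUnion_le
    _ = _ := by
        rw [sum_congr rfl hcard, sum_const, card_powersetCard, card_univ, smul_eq_mul, mul_assoc]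

theorem card_filter_comp_inl_and_comp_inr {ι κ α : Type*} [Fintype ι] [Fintype κ] [Fintype α]
    [DecidableEq ι] [DecidableEq κ] (P : (ι → α) → Prop) (Q : (κ → α) → Prop)
    [DecidablePred P] [DecidablePred Q] :
    #((univ : Finset (ι ⊕ κ → α)).filter fun σ => P (σ ∘ Sum.inl) ∧ Q (σ ∘ Sum.inr)) =
      #(univ.filter P) * #(univ.filter Q) := by
  rw [← card_product]
  exact card_equiv (Equiv.sumArrowEquivProdArrow ι κ α) fun σ => by simp; rfl

theorem card_filter_notMem_inter_le {ι α : Type*} [Fintype ι] [DecidableEq α] (f : ι → α)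
    (X Y : Finset α) : #{i | f i ∉ X ∩ Y} ≤ #{i | f i ∉ X} + #{i | f i ∉ Y} := by
  refine (card_le_card fun i hi => ?_).trans (card_union_le _ _)
  simp only [mem_filter, mem_union, mem_univ, true_and, mem_inter] at hi ⊢
  tauto

theorem sum_ite_le_sum_sum_ite {ι α M : Type*} [Fintype ι] [Fintype α] [AddCommMonoid M]
    [PartialOrder M] [IsOrderedAddMonoid M] {f : α → M} (hf : ∀ a, 0 ≤ f a) (Q : α → Prop)
    [DecidablePred Q] (P : ι → α → Prop) [∀ i, DecidablePred (P i)]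
    (hQ : ∀ a, Q a → ∃ i, P i a) :
    ∑ a, (if Q a then f a else 0) ≤ ∑ i, ∑ a, if P i a then f a else 0 := by
  have hnonneg : ∀ i a, 0 ≤ if P i a then f a else 0 := fun i a => by
    split_ifs
    · exact hf a
    · rfl
  rw [sum_comm]
  refine sum_le_sum fun a _ => ?_
  split_ifs with ha
  · obtain ⟨i, hi⟩ := hQ a ha
    calc f a = if P i a then f a else 0 := (if_pos hi).symm
      _ ≤ ∑ j, if P j a then f a else 0 := single_le_sum (fun j _ => hnonneg j a) (mem_univ i)
  · exact sum_nonneg fun i _ => hnonneg i a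

theorem nearBiclique_of_forall_mem {n q : ℕ} {ε : ℝ} (hε : 0 ≤ ε) {B0 B1 : Finset (Fin q)}
    {σ : Fin n ⊕ Fin n → Fin q} (h0 : ∀ u, σ (Sum.inl u) ∈ B0) (h1 : ∀ v, σ (Sum.inr v) ∈ B1) :
    NearBiclique ε B0 B1 σ := by
  simp only [NearBiclique, filter_true_of_mem fun u _ => h0 u,
    filter_true_of_mem fun u _ => h1 u, card_univ, Fintype.card_fin]
  nlinarith [(Nat.cast_nonneg n : (0 : ℝ) ≤ n)]

theorem NearBiclique.card_notMem_le {n q : ℕ} {ε : ℝ} {B0 B1 : Finset (Fin q)}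
    {σ : Fin n ⊕ Fin n → Fin q} (h : NearBiclique ε B0 B1 σ) :
    (#{u | σ (Sum.inl u) ∉ B0} : ℝ) ≤ 2 * ε * n ∧ (#{v | σ (Sum.inr v) ∉ B1} : ℝ) ≤ 2 * ε * n := by
  have h0 := card_filter_add_card_filter_not (s := univ) fun u : Fin n => σ (Sum.inl u) ∈ B0
  have h1 := card_filter_add_card_filter_not (s := univ) fun v : Fin n => σ (Sum.inr v) ∈ B1
  simp only [card_univ, Fintype.card_fin] at h0 h1
  have h0' : (#{u | σ (Sum.inl u) ∈ B0} : ℝ) + #{u | σ (Sum.inl u) ∉ B0} = n := by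
    exact_mod_cast h0
  have h1' : (#{v | σ (Sum.inr v) ∈ B1} : ℝ) + #{v | σ (Sum.inr v) ∉ B1} = n := by
    exact_mod_cast h1
  unfold NearBiclique at h
  constructor <;> nlinarith [(#{u | σ (Sum.inl u) ∉ B0}).cast_nonneg (α := ℝ)]

theorem IsMaxBiclique.card_inter_lt {q : ℕ} {H : Matrix (Fin q) (Fin q) ℝ}
    {B0 B1 C0 C1 : Finset (Fin q)} (hB : IsMaxBiclique H B0 B1) (hC : IsBiclique H C0 C1)
    (hne : (B0, B1) ≠ (C0, C1)) : #(B0 ∩ C0) < #B0 ∨ #(B1 ∩ C1) < #B1 := by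
  by_contra! h
  obtain ⟨rfl, rfl⟩ := hB.2 C0 C1 hC
    (inter_eq_left.1 (eq_of_subset_of_card_le inter_subset_left h.1))
    (inter_eq_left.1 (eq_of_subset_of_card_le inter_subset_left h.2))
  exact hne rfl

section Weights

variable {n q : ℕ} (G : SimpleGraph (Fin n ⊕ Fin n)) [DecidableRel G.Adj]
  {H : Matrix (Fin q) (Fin q) ℝ} {δ : ℝ}

noncomputable def nearWeight (H : Matrix (Fin q) (Fin q) ℝ) (ε : ℝ) : ℝ :=
  ∑ σ : Fin n ⊕ Fin n → Fin q,
    if ∃ B0 B1, IsMaxBiclique H B0 B1 ∧ NearBiclique ε B0 B1 σ then bipWeight G H σ else 0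

theorem bipWeight_nonneg (hH : IsDeltaMatrix δ H) (σ : Fin n ⊕ Fin n → Fin q) :
    0 ≤ bipWeight G H σ :=
  prod_nonneg fun _ _ => prod_nonneg fun _ _ => by split_ifs <;> simp [hH.1]

theorem bipWeight_le_one (hδ : δ ≤ 1) (hH : IsDeltaMatrix δ H) (σ : Fin n ⊕ Fin n → Fin q) :
    bipWeight G H σ ≤ 1 := by
  refine prod_le_one (fun _ _ => prod_nonneg fun _ _ => by split_ifs <;> simp [hH.1])
    fun u _ => prod_le_one (fun _ _ => by split_ifs <;> simp [hH.1]) fun v _ => ?_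
  split_ifs
  · exact (hH.2.2 _ _).elim le_of_eq (·.trans hδ)
  · rfl

theorem bipWeight_eq_one {B0 B1 : Finset (Fin q)} (hB : IsBiclique H B0 B1)
    {σ : Fin n ⊕ Fin n → Fin q} (h0 : ∀ u, σ (Sum.inl u) ∈ B0) (h1 : ∀ v, σ (Sum.inr v) ∈ B1) :
    bipWeight G H σ = 1 :=
  prod_eq_one fun u _ => prod_eq_one fun v _ => by
    split_ifs
    · exact hB _ (h0 u) _ (h1 v)
    · rfl

theorem nearWeight_nonneg (hH : IsDeltaMatrix δ H) (ε : ℝ) : 0 ≤ nearWeight G H ε :=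
  sum_nonneg fun σ _ => by
    split_ifs
    · exact bipWeight_nonneg G hH σ
    · rfl

theorem card_pow_mul_card_pow_le_nearWeight {ε : ℝ} (hε : 0 ≤ ε) (hH : IsDeltaMatrix δ H)
    {B0 B1 : Finset (Fin q)} (hB : IsMaxBiclique H B0 B1) :
    (#B0 : ℝ) ^ n * #B1 ^ n ≤ nearWeight G H ε := by
  set S := Fintype.piFinset fun x : Fin n ⊕ Fin n => Sum.elim (fun _ => B0) (fun _ => B1) x
  have hS : (#S : ℝ) = #B0 ^ n * #B1 ^ n := by
    simp [S, Fintype.card_piFinset, Fintype.prod_sum_type]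
  have hmem : ∀ σ ∈ S, (∀ u, σ (Sum.inl u) ∈ B0) ∧ ∀ v, σ (Sum.inr v) ∈ B1 := fun σ hσ =>
    ⟨fun u => Fintype.mem_piFinset.1 hσ (Sum.inl u), fun v => Fintype.mem_piFinset.1 hσ (Sum.inr v)⟩
  calc (#B0 : ℝ) ^ n * #B1 ^ n = ∑ σ ∈ S, bipWeight G H σ := by
        rw [← hS, card_eq_sum_ones, Nat.cast_sum, Nat.cast_one]
        exact sum_congr rfl fun σ hσ => (bipWeight_eq_one G hB.1 (hmem σ hσ).1 (hmem σ hσ).2).symm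
    _ = ∑ σ ∈ S, if ∃ C0 C1, IsMaxBiclique H C0 C1 ∧ NearBiclique ε C0 C1 σ
          then bipWeight G H σ else 0 := sum_congr rfl fun σ hσ =>
        (if_pos ⟨B0, B1, hB, nearBiclique_of_forall_mem hε (hmem σ hσ).1 (hmem σ hσ).2⟩).symm
    _ ≤ nearWeight G H ε := sum_le_univ_sum_of_nonneg fun σ => by
        split_ifs
        · exact bipWeight_nonneg G hH σ
        · rfl

end Weights

theorem half_le_one_sub_one_div {q : ℕ} (hq : 2 ≤ q) : 1 / 2 ≤ 1 - 1 / (q : ℝ) := by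
  have : 1 / (q : ℝ) ≤ 1 / 2 := one_div_le_one_div_of_le two_pos (by exact_mod_cast hq)
  linarith

theorem pow_sub_le_two_pow_mul_pow {q n k d b : ℕ} (hq : 2 ≤ q) (hkn : k ≤ n) (hdb : d < b)
    (hbq : b ≤ q) : (d : ℝ) ^ (n - k) ≤ 2 ^ k * (1 - 1 / q) ^ n * b ^ n := by
  set r : ℝ := 1 - 1 / q
  have hr : 1 / 2 ≤ r := half_le_one_sub_one_div hq
  have hr0 : 0 ≤ r := by linarith
  have hb : (1 : ℝ) ≤ b := by exact_mod_cast hdb.trans_le' (Nat.zero_le d)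
  have hd : (d : ℝ) ≤ r * b := by
    have hd1 : (d : ℝ) + 1 ≤ b := by exact_mod_cast hdb
    have hbq' : (b : ℝ) / q ≤ 1 := div_le_one_of_le₀ (by exact_mod_cast hbq) (by positivity)
    have : r * b = b - b / q := by ring
    linarith
  have hrk : r ^ (n - k) ≤ 2 ^ k * r ^ n := by
    calc r ^ (n - k) ≤ r ^ (n - k) * (2 * r) ^ k :=
          le_mul_of_one_le_right (pow_nonneg hr0 _) (one_le_pow₀ (by linarith))
      _ = 2 ^ k * r ^ n := by
          rw [mul_pow, ← Nat.sub_add_cancel hkn, pow_add, Nat.add_sub_cancel]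
          ring
  calc (d : ℝ) ^ (n - k) ≤ (r * b) ^ (n - k) := pow_le_pow_left₀ (Nat.cast_nonneg d) hd _
    _ = r ^ (n - k) * b ^ (n - k) := mul_pow _ _ _
    _ ≤ (2 ^ k * r ^ n) * b ^ n :=
        mul_le_mul hrk (pow_le_pow_right₀ hb (Nat.sub_le n k)) (by positivity)
          (pow_nonneg hr0 _ |>.trans hrk)

theorem pow_sub_le_pow {n k d b : ℕ} (hkn : k < n) (hdb : d ≤ b) : d ^ (n - k) ≤ b ^ n := by
  rcases b.eq_zero_or_pos with rfl | hb
  · rw [Nat.le_zero.1 hdb, zero_pow (by omega)]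
    exact Nat.zero_le _
  · exact (Nat.pow_le_pow_left hdb _).trans (Nat.pow_le_pow_right hb (Nat.sub_le n k))

theorem pow_sub_mul_pow_sub_le_of_lt_or_lt {q n k d0 d1 b0 b1 : ℕ} (hq : 2 ≤ q) (hkn : k < n)
    (hd0 : d0 ≤ b0) (hd1 : d1 ≤ b1) (hb0 : b0 ≤ q) (hb1 : b1 ≤ q) (hlt : d0 < b0 ∨ d1 < b1) :
    (d0 : ℝ) ^ (n - k) * d1 ^ (n - k) ≤ 2 ^ k * (1 - 1 / q) ^ n * (b0 ^ n * b1 ^ n) := by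
  have hr : (0 : ℝ) ≤ 1 - 1 / q := by linarith [half_le_one_sub_one_div hq]
  rcases hlt with h | h
  · calc (d0 : ℝ) ^ (n - k) * d1 ^ (n - k) ≤ (2 ^ k * (1 - 1 / q) ^ n * b0 ^ n) * b1 ^ n :=
          mul_le_mul (pow_sub_le_two_pow_mul_pow hq hkn.le h hb0)
            (by exact_mod_cast pow_sub_le_pow hkn hd1) (by positivity) (by positivity)
      _ = _ := by ring
  · calc (d0 : ℝ) ^ (n - k) * d1 ^ (n - k) ≤ b0 ^ n * (2 ^ k * (1 - 1 / q) ^ n * b1 ^ n) :=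
          mul_le_mul (by exact_mod_cast pow_sub_le_pow hkn hd0)
            (pow_sub_le_two_pow_mul_pow hq hkn.le h hb1) (by positivity) (by positivity)
      _ = _ := by ring

noncomputable def overlapBound (q n k : ℕ) : ℝ :=
  (n.choose k : ℝ) ^ 2 * (2 * q ^ 2) ^ k * (1 - 1 / q) ^ n

theorem overlapBound_nonneg {q n k : ℕ} (hq : 2 ≤ q) : 0 ≤ overlapBound q n k := by
  have : (0 : ℝ) ≤ 1 - 1 / q := by linarith [half_le_one_sub_one_div hq]
  unfold overlapBound
  positivity

theorem NearBiclique.card_notMem_inter_le {n q : ℕ} {ε : ℝ} {B0 B1 C0 C1 : Finset (Fin q)}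
    {σ : Fin n ⊕ Fin n → Fin q} (hB : NearBiclique ε B0 B1 σ) (hC : NearBiclique ε C0 C1 σ) :
    #{u | σ (Sum.inl u) ∉ B0 ∩ C0} ≤ ⌊4 * ε * n⌋₊ ∧
      #{v | σ (Sum.inr v) ∉ B1 ∩ C1} ≤ ⌊4 * ε * n⌋₊ := by
  obtain ⟨hB0, hB1⟩ := hB.card_notMem_le
  obtain ⟨hC0, hC1⟩ := hC.card_notMem_le
  have h0 : (#{u | σ (Sum.inl u) ∉ B0 ∩ C0} : ℝ) ≤
      #{u | σ (Sum.inl u) ∉ B0} + #{u | σ (Sum.inl u) ∉ C0} := by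
    exact_mod_cast card_filter_notMem_inter_le (fun u => σ (Sum.inl u)) B0 C0
  have h1 : (#{v | σ (Sum.inr v) ∉ B1 ∩ C1} : ℝ) ≤
      #{v | σ (Sum.inr v) ∉ B1} + #{v | σ (Sum.inr v) ∉ C1} := by
    exact_mod_cast card_filter_notMem_inter_le (fun v => σ (Sum.inr v)) B1 C1
  exact ⟨Nat.le_floor (by linarith), Nat.le_floor (by linarith)⟩

theorem card_filter_card_notMem_inl_inr_le {n q k : ℕ} (hk : k ≤ n) (D0 D1 : Finset (Fin q)) :
    #((univ : Finset (Fin n ⊕ Fin n → Fin q)).filter fun σ =>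
        #{u | σ (Sum.inl u) ∉ D0} ≤ k ∧ #{v | σ (Sum.inr v) ∉ D1} ≤ k) ≤
      (n.choose k * q ^ k * #D0 ^ (n - k)) * (n.choose k * q ^ k * #D1 ^ (n - k)) := by
  refine (card_filter_comp_inl_and_comp_inr (fun f => #{u | f u ∉ D0} ≤ k)
    fun g => #{v | g v ∉ D1} ≤ k).trans_le ?_
  have := card_filter_card_notMem_le (ι := Fin n) (α := Fin q) (k := k)
  simp only [Fintype.card_fin] at this
  exact Nat.mul_le_mul (this D0 hk) (this D1 hk)

theorem sum_near_near_le {n q : ℕ} (G : SimpleGraph (Fin n ⊕ Fin n)) [DecidableRel G.Adj]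
    {H : Matrix (Fin q) (Fin q) ℝ} {δ ε : ℝ} (hq : 2 ≤ q) (hδ : δ ≤ 1) (hH : IsDeltaMatrix δ H)
    {B0 B1 C0 C1 : Finset (Fin q)} (hB : IsMaxBiclique H B0 B1) (hC : IsMaxBiclique H C0 C1)
    (hne : (B0, B1) ≠ (C0, C1)) (hkn : ⌊4 * ε * n⌋₊ < n) :
    ∑ σ : Fin n ⊕ Fin n → Fin q,
        (if NearBiclique ε B0 B1 σ ∧ NearBiclique ε C0 C1 σ then bipWeight G H σ else 0) ≤
      overlapBound q n ⌊4 * ε * n⌋₊ * (#B0 ^ n * #B1 ^ n) := by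
  set k := ⌊4 * ε * n⌋₊
  have hcard : ∀ D X : Finset (Fin q), #(D ∩ X) ≤ #D ∧ #D ≤ q := fun D X =>
    ⟨card_le_card inter_subset_left, by simpa using card_le_univ D⟩
  calc ∑ σ : Fin n ⊕ Fin n → Fin q,
        (if NearBiclique ε B0 B1 σ ∧ NearBiclique ε C0 C1 σ then bipWeight G H σ else 0)
      ≤ ∑ σ : Fin n ⊕ Fin n → Fin q,
        if #{u | σ (Sum.inl u) ∉ B0 ∩ C0} ≤ k ∧ #{v | σ (Sum.inr v) ∉ B1 ∩ C1} ≤ k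
        then 1 else 0 := by
        refine sum_le_sum fun σ _ => ?_
        split_ifs with hnear hk
        · exact bipWeight_le_one G hδ hH σ
        · exact absurd (hnear.1.card_notMem_inter_le hnear.2) hk
        · exact zero_le_one
        · rfl
    _ ≤ ((n.choose k * q ^ k * #(B0 ∩ C0) ^ (n - k)) *
          (n.choose k * q ^ k * #(B1 ∩ C1) ^ (n - k)) : ℕ) := by
        rw [sum_boole]
        exact_mod_cast card_filter_card_notMem_inl_inr_le hkn.le _ _
    _ = (n.choose k * q ^ k : ℝ) ^ 2 * ((#(B0 ∩ C0) : ℝ) ^ (n - k) * #(B1 ∩ C1) ^ (n - k)) := by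
        push_cast
        ring
    _ ≤ (n.choose k * q ^ k : ℝ) ^ 2 * (2 ^ k * (1 - 1 / q) ^ n * (#B0 ^ n * #B1 ^ n)) := by
        refine mul_le_mul_of_nonneg_left ?_ (by positivity)
        exact pow_sub_mul_pow_sub_le_of_lt_or_lt hq hkn (hcard B0 C0).1 (hcard B1 C1).1
          (hcard B0 C0).2 (hcard B1 C1).2 (hB.card_inter_lt hC.1 hne)
    _ = overlapBound q n k * (#B0 ^ n * #B1 ^ n) := by
        unfold overlapBound
        ring

theorem choose_le_exp_mul_inv_pow (n k : ℕ) {c : ℝ} (hc : 0 < c) :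
    (n.choose k : ℝ) ≤ exp (c * n) * c⁻¹ ^ k :=
  calc (n.choose k : ℝ) ≤ n ^ k / k.factorial := Nat.choose_le_pow_div k n
    _ = (c * n) ^ k / k.factorial * c⁻¹ ^ k := by
        rw [mul_pow, div_mul_eq_mul_div, mul_right_comm, ← mul_pow, mul_inv_cancel₀ hc.ne',
          one_pow, one_mul]
    _ ≤ exp (c * n) * c⁻¹ ^ k := by
        gcongr
        exact pow_div_factorial_le_exp _ (by positivity) k

theorem pow_le_exp_mul_log {a x : ℝ} {k : ℕ} (ha : 1 ≤ a) (hk : (k : ℝ) ≤ x) :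
    a ^ k ≤ exp (x * log a) := by
  rw [← exp_log (by linarith : 0 < a), ← exp_nat_mul, log_exp]
  exact exp_le_exp.2 (mul_le_mul_of_nonneg_right hk (log_nonneg ha))

theorem overlapBound_le_exp {q n k : ℕ} {c : ℝ} (hq : 2 ≤ q) (hc : 0 < c) (hc1 : c ≤ 1)
    (hk : (k : ℝ) ≤ c * n) :
    overlapBound q n k ≤ exp (n * (2 * c + c * log (2 * q ^ 2 / c ^ 2) + log (1 - 1 / q))) := by
  have hq' : (2 : ℝ) ≤ q := by exact_mod_cast hq
  have hr : 0 < 1 - 1 / (q : ℝ) := by linarith [half_le_one_sub_one_div hq]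
  have ha : 1 ≤ 2 * (q : ℝ) ^ 2 / c ^ 2 := by
    rw [le_div_iff₀ (by positivity), one_mul]
    nlinarith
  calc overlapBound q n k = (n.choose k : ℝ) ^ 2 * (2 * q ^ 2) ^ k * (1 - 1 / q) ^ n := rfl
    _ ≤ (exp (c * n) * c⁻¹ ^ k) ^ 2 * (2 * q ^ 2) ^ k * exp (log (1 - 1 / q)) ^ n := by
        rw [exp_log hr]
        gcongr
        exact choose_le_exp_mul_inv_pow n k hc
    _ = exp (c * n) ^ 2 * (2 * q ^ 2 / c ^ 2) ^ k * exp (log (1 - 1 / q)) ^ n := by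
        rw [div_eq_mul_inv _ (c ^ 2), mul_pow, mul_pow, ← inv_pow, ← pow_mul, ← pow_mul]
        ring
    _ ≤ exp (c * n) ^ 2 * exp (c * n * log (2 * q ^ 2 / c ^ 2)) * exp (log (1 - 1 / q)) ^ n := by
        gcongr
        exact pow_le_exp_mul_log ha hk
    _ = exp (n * (2 * c + c * log (2 * q ^ 2 / c ^ 2) + log (1 - 1 / q))) := by
        simp only [← exp_nat_mul, ← exp_add]
        push_cast
        ring_nf

theorem log_two_mul_sq_div_sq_le {q : ℕ} (hq : 2 ≤ q) {c : ℝ} (hc : c = (20 * q * log q)⁻¹) :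
    log (2 * q ^ 2 / c ^ 2) ≤ 10 * log 2 + 4 * log q + 2 * log (log q) := by
  have hq' : (0 : ℝ) < q := by positivity
  have hL : 0 < log (q : ℝ) := log_pos (by exact_mod_cast hq)
  have hle : 2 * (q : ℝ) ^ 2 / c ^ 2 ≤ 2 ^ 10 * q ^ 4 * log q ^ 2 := by
    rw [hc, div_le_iff₀ (by positivity)]
    field_simp
    nlinarith [pow_pos hL 2, pow_pos hq' 4]
  calc log (2 * q ^ 2 / c ^ 2) ≤ log (2 ^ 10 * q ^ 4 * log q ^ 2) :=
        log_le_log (by rw [hc]; positivity) hle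
    _ = 10 * log 2 + 4 * log q + 2 * log (log q) := by
        rw [log_mul (by positivity) (by positivity), log_mul (by positivity) (by positivity),
          log_pow, log_pow, log_pow]
        push_cast
        ring

theorem exponent_lt_neg_inv {q : ℕ} (hq : 2 ≤ q) {c : ℝ} (hc : c = (20 * q * log q)⁻¹) :
    2 * c + c * log (2 * q ^ 2 / c ^ 2) + log (1 - 1 / q) < -1 / (3 * q) := by
  set L := log (q : ℝ)
  have hq' : (2 : ℝ) ≤ q := by exact_mod_cast hq
  have hl2 := log_two_gt_d9
  have hl2' := log_two_lt_d9
  have hL : 0 < L := by linarith [log_le_log two_pos hq']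
  have hc0 : 0 < c := by rw [hc]; positivity
  have hlogL : log L ≤ L - 1 := log_le_sub_one_of_pos hL
  have key : c * (2 + 10 * log 2 + 4 * L + 2 * log L) < -log (1 - 1 / q) - 1 / (3 * q) := by
    rw [hc, ← div_eq_inv_mul, div_lt_iff₀ (by positivity)]
    -- for `q = 2` the estimate `1 / q ≤ -log (1 - 1 / q)` is too weak; use the exact value `log 2`
    rcases hq.eq_or_lt with rfl | hq3
    · have : -log (1 - 1 / ((2 : ℕ) : ℝ)) = L := by
        rw [show (1 : ℝ) - 1 / ((2 : ℕ) : ℝ) = 2⁻¹ by norm_num, log_inv, neg_neg]; rfl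
      rw [this]
      simp only [L, Nat.cast_ofNat] at hlogL ⊢
      nlinarith
    · have hL3 : 1 < L := by
        rw [lt_log_iff_exp_lt (by linarith)]
        have := exp_one_lt_d9
        have : (3 : ℝ) ≤ q := by exact_mod_cast hq3
        linarith
      have hr : 1 / (q : ℝ) ≤ -log (1 - 1 / q) := by
        have := log_le_sub_one_of_pos (x := 1 - 1 / (q : ℝ))
          (by linarith [half_le_one_sub_one_div hq])
        linarith
      have h20 : 20 * q * L * (1 / q) = 20 * L := by field_simp
      have h3 : 20 * q * L * (1 / (3 * q)) = 20 * L / 3 := by field_simp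
      nlinarith [mul_le_mul_of_nonneg_left hr (by positivity : (0 : ℝ) ≤ 20 * q * L)]
  have := mul_le_mul_of_nonneg_left (log_two_mul_sq_div_sq_le hq hc) hc0.le
  have : -1 / (3 * (q : ℝ)) = -(1 / (3 * q)) := by ring
  linarith

theorem eventually_mul_exp_le_exp (a : ℝ) {φ ψ : ℝ} (h : φ < ψ) :
    ∀ᶠ n : ℕ in atTop, a * exp (n * φ) ≤ exp (n * ψ) := by
  have hgrow : Tendsto (fun n : ℕ => exp (n * (ψ - φ))) atTop atTop :=
    tendsto_exp_atTop.comp (tendsto_natCast_atTop_atTop.atTop_mul_const (sub_pos.2 h))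
  filter_upwards [hgrow.eventually_ge_atTop a] with n hn
  calc a * exp (n * φ) ≤ exp (n * (ψ - φ)) * exp (n * φ) := by gcongr
    _ = exp (n * ψ) := by rw [← exp_add]; ring_nf

theorem sum_overlap_le {n q : ℕ} (G : SimpleGraph (Fin n ⊕ Fin n)) [DecidableRel G.Adj]
    {H : Matrix (Fin q) (Fin q) ℝ} {δ ε ε' : ℝ} (hq : 2 ≤ q) (hδ : δ ≤ 1)
    (hH : IsDeltaMatrix δ H) (hε : 0 ≤ ε) (hkn : ⌊4 * ε' * n⌋₊ < n) :
    (∑ σ : Fin n ⊕ Fin n → Fin q,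
        if ∃ B0 B1 C0 C1, IsMaxBiclique H B0 B1 ∧ IsMaxBiclique H C0 C1 ∧
            (B0, B1) ≠ (C0, C1) ∧ NearBiclique ε' B0 B1 σ ∧ NearBiclique ε' C0 C1 σ
        then bipWeight G H σ else 0) ≤
      Fintype.card (Finset (Fin q) × Finset (Fin q)) ^ 2 * overlapBound q n ⌊4 * ε' * n⌋₊ *
        nearWeight G H ε := by
  calc _ ≤ ∑ p : (Finset (Fin q) × Finset (Fin q)) × (Finset (Fin q) × Finset (Fin q)),
        ∑ σ : Fin n ⊕ Fin n → Fin q,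
          if IsMaxBiclique H p.1.1 p.1.2 ∧ IsMaxBiclique H p.2.1 p.2.2 ∧ p.1 ≠ p.2 ∧
            NearBiclique ε' p.1.1 p.1.2 σ ∧ NearBiclique ε' p.2.1 p.2.2 σ
          then bipWeight G H σ else 0 :=
        sum_ite_le_sum_sum_ite (bipWeight_nonneg G hH) _ _
          fun σ ⟨B0, B1, C0, C1, h⟩ => ⟨((B0, B1), C0, C1), h⟩
    _ ≤ ∑ _p : (Finset (Fin q) × Finset (Fin q)) × (Finset (Fin q) × Finset (Fin q)),
          overlapBound q n ⌊4 * ε' * n⌋₊ * nearWeight G H ε := by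
        refine sum_le_sum fun ⟨⟨B0, B1⟩, C0, C1⟩ _ => ?_
        by_cases hp : IsMaxBiclique H B0 B1 ∧ IsMaxBiclique H C0 C1 ∧ (B0, B1) ≠ (C0, C1)
        · simp only [hp, true_and, ne_eq, not_false_eq_true]
          exact (sum_near_near_le G hq hδ hH hp.1 hp.2.1 hp.2.2 hkn).trans
            (mul_le_mul_of_nonneg_left
              (card_pow_mul_card_pow_le_nearWeight G hε hH hp.1) (overlapBound_nonneg hq))
        · rw [sum_eq_zero fun σ _ => if_neg fun h => hp ⟨h.1, h.2.1, h.2.2.1⟩]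
          exact mul_nonneg (overlapBound_nonneg hq) (nearWeight_nonneg G hH ε)
    _ = _ := by
        rw [sum_const, card_univ, Fintype.card_prod, nsmul_eq_mul, ← sq]
        push_cast
        ring

theorem one_lt_twenty_mul_log {q : ℕ} (hq : 2 ≤ q) : 1 < 20 * (q : ℝ) * log q := by
  have hq' : (2 : ℝ) ≤ q := by exact_mod_cast hq
  have := log_le_log two_pos hq'
  have := log_two_gt_d9
  nlinarith

theorem stmt19_general (q Δ : ℕ) (lam δ ε : ℝ) (hq : 2 ≤ q) (hδ1 : δ < 1)
    (hε0 : 0 < ε) (hεup : ε ≤ 1 / (240 * q * Real.log q))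
    (H : Matrix (Fin q) (Fin q) ℝ) (hH : IsDeltaMatrix δ H) :
    ∃ N : ℕ, ∀ n : ℕ, N ≤ n →
      ∀ (G : SimpleGraph (Fin n ⊕ Fin n)) (_ : DecidableRel G.Adj),
        G.Connected →
        (∀ a b : Fin n, ¬ G.Adj (Sum.inl a) (Sum.inl b) ∧ ¬ G.Adj (Sum.inr a) (Sum.inr b)) →
        (∀ v, G.degree v = Δ) →
        (∀ μ ∈ spectrum ℝ (G.adjMatrix ℝ), μ ≠ (Δ : ℝ) → μ ≠ -(Δ : ℝ) → |μ| ≤ lam) →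
        (∑ σ : Fin n ⊕ Fin n → Fin q,
            if ∃ B0 B1 C0 C1, IsMaxBiclique H B0 B1 ∧ IsMaxBiclique H C0 C1 ∧
                (B0, B1) ≠ (C0, C1) ∧
                NearBiclique (3 * ε) B0 B1 σ ∧ NearBiclique (3 * ε) C0 C1 σ
            then bipWeight G H σ else 0) ≤
          Real.exp (-(n : ℝ) / (3 * q)) *
            ∑ σ : Fin n ⊕ Fin n → Fin q,
              if ∃ B0 B1, IsMaxBiclique H B0 B1 ∧ NearBiclique ε B0 B1 σ
              then bipWeight G H σ else 0 := by
  set c : ℝ := (20 * q * log q)⁻¹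
  have hc : 0 < c := inv_pos.2 (one_pos.trans (one_lt_twenty_mul_log hq))
  have hc1 : c < 1 := inv_lt_one_of_one_lt₀ (one_lt_twenty_mul_log hq)
  have hεc : 4 * (3 * ε) ≤ c := by
    calc 4 * (3 * ε) ≤ 12 * (1 / (240 * q * log q)) := by linarith
      _ = c := by simp only [c]; field_simp; norm_num
  obtain ⟨N, hN⟩ := eventually_atTop.1 <|
    (eventually_mul_exp_le_exp (Fintype.card (Finset (Fin q) × Finset (Fin q)) ^ 2)
      (exponent_lt_neg_inv hq rfl)).and (eventually_ge_atTop 1)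
  refine ⟨N, fun n hn G _ _ _ _ _ => ?_⟩
  obtain ⟨hexp, hn1⟩ := hN n hn
  have hk : (⌊4 * (3 * ε) * n⌋₊ : ℝ) ≤ c * n :=
    (Nat.floor_le (by positivity)).trans (by gcongr)
  have hkn : ⌊4 * (3 * ε) * n⌋₊ < n := by
    have : (1 : ℝ) ≤ n := by exact_mod_cast hn1
    have : c * n < n := by nlinarith
    exact_mod_cast hk.trans_lt this
  calc _ ≤ _ := sum_overlap_le G hq hδ1.le hH hε0.le hkn
    _ ≤ Fintype.card (Finset (Fin q) × Finset (Fin q)) ^ 2 *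
          exp (n * (2 * c + c * log (2 * q ^ 2 / c ^ 2) + log (1 - 1 / q))) *
          nearWeight G H ε := by
        gcongr
        · exact nearWeight_nonneg G hH ε
        · exact overlapBound_le_exp hq hc hc1.le hk
    _ ≤ exp (n * (-1 / (3 * q))) * nearWeight G H ε :=
        mul_le_mul_of_nonneg_right hexp (nearWeight_nonneg G hH ε)
    _ = _ := by
        rw [mul_div_assoc', mul_neg_one]
        rfl

/-- For sufficiently large `n`, the overlap partition function is exponentially small
compared with `Z_{G,H,ε}`. -/
theorem stmt19 (q Δ : ℕ) (lam δ ε : ℝ) (hq : 2 ≤ q) (hΔ : 3 ≤ Δ)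
    (hlam0 : 0 < lam) (hlamΔ : lam < Δ) (hδ0 : 0 < δ) (hδ1 : δ < 1)
    (hε0 : 0 < ε) (hεup : ε ≤ 1 / (240 * q * Real.log q))
    (hε3 : 8 * q ^ 2 * Real.log q / ((Δ : ℝ) * Real.log (1 / δ)) ≤ ε ^ 2)
    (hεlam : 2 * q * lam / Δ ≤ ε)
    (H : Matrix (Fin q) (Fin q) ℝ) (hsymm : H.IsSymm) (hH : IsDeltaMatrix δ H) :
    ∃ N : ℕ, ∀ n : ℕ, N ≤ n →
      ∀ (G : SimpleGraph (Fin n ⊕ Fin n)) (_ : DecidableRel G.Adj),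
        G.Connected →
        (∀ a b : Fin n, ¬ G.Adj (Sum.inl a) (Sum.inl b) ∧ ¬ G.Adj (Sum.inr a) (Sum.inr b)) →
        (∀ v, G.degree v = Δ) →
        (∀ μ ∈ spectrum ℝ (G.adjMatrix ℝ), μ ≠ (Δ : ℝ) → μ ≠ -(Δ : ℝ) → |μ| ≤ lam) →
        (∑ σ : Fin n ⊕ Fin n → Fin q,
            if ∃ B0 B1 C0 C1, IsMaxBiclique H B0 B1 ∧ IsMaxBiclique H C0 C1 ∧
                (B0, B1) ≠ (C0, C1) ∧
                NearBiclique (3 * ε) B0 B1 σ ∧ NearBiclique (3 * ε) C0 C1 σ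
            then bipWeight G H σ else 0) ≤
          Real.exp (-(n : ℝ) / (3 * q)) *
            ∑ σ : Fin n ⊕ Fin n → Fin q,
              if ∃ B0 B1, IsMaxBiclique H B0 B1 ∧ NearBiclique ε B0 B1 σ
              then bipWeight G H σ else 0 :=
  stmt19_general q Δ lam δ ε hq hδ1 hε0 hεup H hH
end
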